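/- arXiv:math/0512098 — 7 statements merged into one kernel-verified Lean document; each statement's English description precedes it below -/
import Mathlib

section
/- If f : ℝ^n → ℝ is a nonnegative log-concave function, then its difference function Δf is also log-concave. -/
open MeasureTheory Set
open scoped ENNReal

/-- A nonnegative function `f : ℝⁿ → ℝ` is log-concave if
`f((1−t)x + t y) ≥ f(x)^(1−t) * f(y)^t` for all `x, y` and `t ∈ [0,1]`. -/
def LogConcaveFn {n : ℕ} (f : (Fin n → ℝ) → ℝ) : Prop :=
  ∀ x y : Fin n → ℝ, ∀ t : ℝ, t ∈ Set.Icc (0 : ℝ) 1 →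
    f x ^ (1 - t) * f y ^ t ≤ f ((1 - t) • x + t • y)

/-- The difference function of `f`:
`Δf(z) = sup { √(f(x)·f(−y)) : (x+y)/2 = z }`, with values in `[0,∞]`. -/
noncomputable def diffFn {n : ℕ} (f : (Fin n → ℝ) → ℝ) (z : Fin n → ℝ) : ℝ≥0∞ :=
  sSup {r : ℝ≥0∞ | ∃ x y : Fin n → ℝ, (1 / 2 : ℝ) • (x + y) = z ∧
    r = ENNReal.ofReal (Real.sqrt (f x * f (-y)))}

lemma diffFn_set_nonempty {n : ℕ} (f : (Fin n → ℝ) → ℝ) (z : Fin n → ℝ) :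
    {r : ℝ≥0∞ | ∃ x y : Fin n → ℝ, (1 / 2 : ℝ) • (x + y) = z ∧
      r = ENNReal.ofReal (Real.sqrt (f x * f (-y)))}.Nonempty := by
  refine ⟨_, z, z, ?_, rfl⟩
  module

lemma key_pointwise {n : ℕ} (f : (Fin n → ℝ) → ℝ)
    (hf0 : ∀ x, 0 ≤ f x) (hf : LogConcaveFn f)
    (X Y : Fin n → ℝ) (t : ℝ) (ht : t ∈ Set.Icc (0 : ℝ) 1)
    (r1 r2 : ℝ≥0∞)
    (h1 : r1 ∈ {r : ℝ≥0∞ | ∃ x y : Fin n → ℝ, (1 / 2 : ℝ) • (x + y) = X ∧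
      r = ENNReal.ofReal (Real.sqrt (f x * f (-y)))})
    (h2 : r2 ∈ {r : ℝ≥0∞ | ∃ x y : Fin n → ℝ, (1 / 2 : ℝ) • (x + y) = Y ∧
      r = ENNReal.ofReal (Real.sqrt (f x * f (-y)))}) :
    r1 ^ (1 - t) * r2 ^ t ≤ diffFn f ((1 - t) • X + t • Y) := by
  obtain ⟨ht0, ht1⟩ := ht
  have hp : (0:ℝ) ≤ 1 - t := by linarith
  obtain ⟨x1, y1, hX, rfl⟩ := h1
  obtain ⟨x2, y2, hY, rfl⟩ := h2
  set x3 : Fin n → ℝ := (1 - t) • x1 + t • x2 with hx3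
  set y3 : Fin n → ℝ := (1 - t) • y1 + t • y2 with hy3
  have hmem : (1 / 2 : ℝ) • (x3 + y3) = (1 - t) • X + t • Y := by
    rw [← hX, ← hY, hx3, hy3]; module
  have hfx : f x1 ^ (1 - t) * f x2 ^ t ≤ f x3 := hf x1 x2 t ⟨ht0, ht1⟩
  have hfy : f (-y1) ^ (1 - t) * f (-y2) ^ t ≤ f (-y3) := by
    have := hf (-y1) (-y2) t ⟨ht0, ht1⟩
    have heq : (1 - t) • (-y1) + t • (-y2) = -y3 := by rw [hy3]; module
    rwa [heq] at this
  set a : ℝ := f x1 * f (-y1) with ha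
  set b : ℝ := f x2 * f (-y2) with hb
  have ha0 : 0 ≤ a := mul_nonneg (hf0 _) (hf0 _)
  have hb0 : 0 ≤ b := mul_nonneg (hf0 _) (hf0 _)
  have hcore : a ^ (1 - t) * b ^ t ≤ f x3 * f (-y3) := by
    have : a ^ (1 - t) * b ^ t =
        (f x1 ^ (1 - t) * f x2 ^ t) * (f (-y1) ^ (1 - t) * f (-y2) ^ t) := by
      rw [ha, hb, Real.mul_rpow (hf0 _) (hf0 _), Real.mul_rpow (hf0 _) (hf0 _)]
      ring
    rw [this]
    exact mul_le_mul hfx hfy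
      (mul_nonneg (Real.rpow_nonneg (hf0 _) _) (Real.rpow_nonneg (hf0 _) _)) (hf0 _)
  have hsqrt : Real.sqrt a ^ (1 - t) * Real.sqrt b ^ t ≤ Real.sqrt (f x3 * f (-y3)) := by
    have h1 : Real.sqrt a ^ (1 - t) * Real.sqrt b ^ t
        = Real.sqrt (a ^ (1 - t) * b ^ t) := by
      rw [Real.sqrt_eq_rpow, Real.sqrt_eq_rpow, Real.sqrt_eq_rpow,
        Real.mul_rpow (Real.rpow_nonneg ha0 _) (Real.rpow_nonneg hb0 _),
        ← Real.rpow_mul ha0, ← Real.rpow_mul hb0,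
        ← Real.rpow_mul ha0, ← Real.rpow_mul hb0]
      ring_nf
    rw [h1]
    exact Real.sqrt_le_sqrt hcore
  calc ENNReal.ofReal (Real.sqrt a) ^ (1 - t) * ENNReal.ofReal (Real.sqrt b) ^ t
      = ENNReal.ofReal (Real.sqrt a ^ (1 - t) * Real.sqrt b ^ t) := by
        rw [ENNReal.ofReal_rpow_of_nonneg (Real.sqrt_nonneg _) hp,
          ENNReal.ofReal_rpow_of_nonneg (Real.sqrt_nonneg _) ht0,
          ← ENNReal.ofReal_mul (Real.rpow_nonneg (Real.sqrt_nonneg _) _)]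
    _ ≤ ENNReal.ofReal (Real.sqrt (f x3 * f (-y3))) := ENNReal.ofReal_le_ofReal hsqrt
    _ ≤ diffFn f ((1 - t) • X + t • Y) := le_sSup ⟨x3, y3, hmem, rfl⟩

lemma rpow_sSup {S : Set ℝ≥0∞} (hS : S.Nonempty) {p : ℝ} (hp : 0 < p) :
    sSup S ^ p = ⨆ r ∈ S, r ^ p := by
  have h := (ENNReal.orderIsoRpow p hp).map_sSup S
  simp only [ENNReal.orderIsoRpow_apply] at h
  exact h

/-- If `f` is nonnegative and log-concave, then its difference function `Δf`
is log-concave (as a `[0,∞]`-valued function). -/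
theorem diffFn_logConcave {n : ℕ} (f : (Fin n → ℝ) → ℝ)
    (hf0 : ∀ x, 0 ≤ f x) (hf : LogConcaveFn f) :
    ∀ x y : Fin n → ℝ, ∀ t : ℝ, t ∈ Set.Icc (0 : ℝ) 1 →
      diffFn f x ^ (1 - t) * diffFn f y ^ t ≤ diffFn f ((1 - t) • x + t • y) := by
  intro X Y t ht
  obtain ⟨ht0, ht1⟩ := ht
  rcases eq_or_lt_of_le ht0 with h0 | h0
  · subst h0
    simp only [sub_zero, ENNReal.rpow_one, ENNReal.rpow_zero, mul_one, one_smul, zero_smul,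
      add_zero, le_refl]
  rcases eq_or_lt_of_le ht1 with h1 | h1
  · subst h1
    simp only [sub_self, ENNReal.rpow_zero, ENNReal.rpow_one, one_mul, one_smul, zero_smul,
      zero_add, le_refl]
  have hp : (0:ℝ) < 1 - t := by linarith
  rw [diffFn, diffFn, rpow_sSup (diffFn_set_nonempty f X) hp,
    rpow_sSup (diffFn_set_nonempty f Y) h0]
  rw [ENNReal.iSup_mul]
  refine iSup_le fun r1 => ?_
  rw [ENNReal.iSup_mul]
  refine iSup_le fun hr1 => ?_
  rw [ENNReal.mul_iSup]
  refine iSup_le fun r2 => ?_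
  rw [ENNReal.mul_iSup]
  refine iSup_le fun hr2 => ?_
  exact key_pointwise f hf0 hf X Y t ⟨ht0, ht1⟩ r1 r2 hr1 hr2
end

section
/- Let n ≥ 1 and define g : ℝ^n → ℝ by g(x_1,…,x_n) = e^{−(x_1+⋯+x_n)} if x_i ≥ 0 for all i = 1,…,n, and g(x) = 0 otherwise. Then Δg(z_1,…,z_n) = e^{−(|z_1|+⋯+|z_n|)} for all z ∈ ℝ^n, and consequently ∫_{ℝ^n} Δg(z) dz = 2^n ∫_{ℝ^n} g(x) dx. -/
open MeasureTheory Set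
open scoped ENNReal

/-- `g(x) = e^{−(x₁+⋯+xₙ)}` on the nonnegative orthant and `0` elsewhere. -/
noncomputable def gExp (n : ℕ) : (Fin n → ℝ) → ℝ := fun x =>
  if ∀ i, 0 ≤ x i then Real.exp (-(∑ i, x i)) else 0

theorem Real.exp_neg_sum {ι : Type*} (s : Finset ι) (f : ι → ℝ) :
    Real.exp (-∑ i ∈ s, f i) = ∏ i ∈ s, Real.exp (-f i) := by
  rw [← Finset.sum_neg_distrib, Real.exp_sum]

theorem lintegral_fin_nat_prod_eq_prod {n : ℕ} {E : Type*} [MeasurableSpace E]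
    {μ : Fin n → Measure E} [∀ i, SigmaFinite (μ i)] {f : Fin n → E → ℝ≥0∞}
    (hf : ∀ i, Measurable (f i)) :
    ∫⁻ x : Fin n → E, ∏ i, f i (x i) ∂(Measure.pi μ) = ∏ i, ∫⁻ x, f i x ∂(μ i) := by
  induction n with
  | zero => simp
  | succ n ih =>
    have hg : Measurable fun x : Fin n → E ↦ ∏ i, f i.succ (x i) :=
      Finset.measurable_prod _ fun i _ ↦ (hf i.succ).comp (measurable_pi_apply i)
    rw [← ((measurePreserving_piFinSuccAbove μ 0).symm).lintegral_comp_emb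
      (MeasurableEquiv.measurableEmbedding _)]
    simp_rw [MeasurableEquiv.piFinSuccAbove_symm_apply, Fin.insertNthEquiv,
      Fin.prod_univ_succ, Fin.insertNth_zero, Equiv.coe_fn_mk, Fin.cons_succ,
      Fin.zero_succAbove, cast_eq, Fin.cons_zero]
    rw [lintegral_prod_mul (hf 0).aemeasurable hg.aemeasurable, ih fun i ↦ hf i.succ]

theorem lintegral_ofReal_prod_eq_pow {n : ℕ} {f : ℝ → ℝ} (hf : Measurable f)
    (hf₀ : ∀ t, 0 ≤ f t) :
    ∫⁻ x : Fin n → ℝ, ENNReal.ofReal (∏ i, f (x i)) = (∫⁻ t, ENNReal.ofReal (f t)) ^ n := by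
  simp_rw [ENNReal.ofReal_prod_of_nonneg fun i _ ↦ hf₀ _]
  rw [volume_pi, lintegral_fin_nat_prod_eq_prod fun _ ↦ hf.ennreal_ofReal, Finset.prod_const,
    Finset.card_univ, Fintype.card_fin]

theorem diffFn_eq_ofReal {n : ℕ} {f : (Fin n → ℝ) → ℝ} {z : Fin n → ℝ} {c : ℝ} (hc : 0 ≤ c)
    (hle : ∀ x y, (1 / 2 : ℝ) • (x + y) = z → f x * f (-y) ≤ c ^ 2)
    (heq : ∃ x y, (1 / 2 : ℝ) • (x + y) = z ∧ f x * f (-y) = c ^ 2) :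
    diffFn f z = ENNReal.ofReal c := by
  refine le_antisymm (sSup_le ?_) (le_sSup ?_)
  · rintro r ⟨x, y, hxy, rfl⟩
    exact ENNReal.ofReal_le_ofReal <| (Real.sqrt_le_sqrt (hle x y hxy)).trans_eq (Real.sqrt_sq hc)
  · obtain ⟨x, y, hxy, h⟩ := heq
    exact ⟨x, y, hxy, by rw [h, Real.sqrt_sq hc]⟩

noncomputable def oneSidedExp : ℝ → ℝ := (Ici 0).indicator fun t ↦ Real.exp (-t)

theorem oneSidedExp_nonneg (t : ℝ) : 0 ≤ oneSidedExp t :=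
  indicator_nonneg (fun _ _ ↦ (Real.exp_pos _).le) t

theorem measurable_oneSidedExp : Measurable oneSidedExp :=
  (measurable_neg.exp).indicator measurableSet_Ici

theorem oneSidedExp_mul_neg_le (a b : ℝ) :
    oneSidedExp a * oneSidedExp (-b) ≤ Real.exp (-|(a + b) / 2|) ^ 2 := by
  by_cases ha : 0 ≤ a
  · by_cases hb : 0 ≤ -b
    · rw [oneSidedExp, indicator_of_mem (mem_Ici.2 ha), indicator_of_mem (mem_Ici.2 hb),
        ← Real.exp_add, ← Real.exp_nat_mul, Real.exp_le_exp, abs_div, abs_two]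
      have : |a + b| ≤ a - b := (abs_add_le a b).trans_eq <| by
        rw [abs_of_nonneg ha, abs_of_nonpos (neg_nonneg.1 hb), sub_eq_add_neg]
      push_cast
      linarith
    · simp [oneSidedExp, indicator_of_notMem (show -b ∉ Ici 0 from hb), sq_nonneg]
  · simp [oneSidedExp, indicator_of_notMem (show a ∉ Ici 0 from ha), sq_nonneg]

theorem oneSidedExp_mul_neg_eq (c : ℝ) :
    oneSidedExp (c + |c|) * oneSidedExp (-(c - |c|)) = Real.exp (-|c|) ^ 2 := by
  have h₁ : 0 ≤ c + |c| := by linarith [neg_abs_le c]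
  have h₂ : 0 ≤ -(c - |c|) := by linarith [le_abs_self c]
  simp only [oneSidedExp, indicator_of_mem (mem_Ici.2 h₁), indicator_of_mem (mem_Ici.2 h₂),
    ← Real.exp_add, ← Real.exp_nat_mul]
  congr 1
  push_cast
  ring

theorem gExp_eq_prod (n : ℕ) (x : Fin n → ℝ) : gExp n x = ∏ i, oneSidedExp (x i) := by
  by_cases h : ∀ i, 0 ≤ x i
  · simp [gExp, h, oneSidedExp, Real.exp_neg_sum]
  · push Not at h
    obtain ⟨i, hi⟩ := h
    rw [gExp, if_neg (not_forall.2 ⟨i, hi.not_ge⟩), eq_comm]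
    exact Finset.prod_eq_zero (Finset.mem_univ i) (indicator_of_notMem hi.not_ge _)

theorem diffFn_gExp_apply (n : ℕ) (z : Fin n → ℝ) :
    diffFn (gExp n) z = ENNReal.ofReal (Real.exp (-(∑ i, |z i|))) := by
  have hprod : ∀ x y, gExp n x * gExp n (-y) = ∏ i, oneSidedExp (x i) * oneSidedExp (-y i) := by
    simp [gExp_eq_prod, Finset.prod_mul_distrib]
  have hexp : Real.exp (-(∑ i, |z i|)) ^ 2 = ∏ i, Real.exp (-|z i|) ^ 2 := by
    rw [Real.exp_neg_sum, Finset.prod_pow]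
  refine diffFn_eq_ofReal (Real.exp_pos _).le (fun x y hxy ↦ ?_) ⟨z + |z|, z - |z|, by module, ?_⟩
  · rw [hprod, hexp, ← hxy]
    refine Finset.prod_le_prod (fun i _ ↦ ?_) fun i _ ↦ ?_
    · exact mul_nonneg (oneSidedExp_nonneg _) (oneSidedExp_nonneg _)
    · simpa [div_eq_inv_mul] using oneSidedExp_mul_neg_le (x i) (y i)
  · simp only [hprod, hexp, Pi.add_apply, Pi.sub_apply, Pi.abs_apply, oneSidedExp_mul_neg_eq]

theorem lintegral_exp_neg_abs :
    ∫⁻ t, ENNReal.ofReal (Real.exp (-|t|)) = 2 * ∫⁻ t, ENNReal.ofReal (oneSidedExp t) := by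
  have hsplit : (fun t ↦ ENNReal.ofReal (Real.exp (-|t|))) =ᵐ[volume]
      fun t ↦ ENNReal.ofReal (oneSidedExp t) + ENNReal.ofReal (oneSidedExp (-t)) := by
    filter_upwards [Measure.ae_ne volume 0] with t ht
    rcases ht.lt_or_gt with ht | ht
    · simp [oneSidedExp, ht.not_ge, ht.le, abs_of_neg ht]
    · simp [oneSidedExp, ht.le, (neg_neg_of_pos ht).not_ge, abs_of_pos ht]
  rw [lintegral_congr_ae hsplit, lintegral_add_left measurable_oneSidedExp.ennreal_ofReal,
    lintegral_neg_eq_self (fun t ↦ ENNReal.ofReal (oneSidedExp t)), two_mul]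

theorem diffFn_gExp_general (n : ℕ) :
    (∀ z : Fin n → ℝ, diffFn (gExp n) z = ENNReal.ofReal (Real.exp (-(∑ i, |z i|)))) ∧
    ∫⁻ z, diffFn (gExp n) z = 2 ^ n * ∫⁻ x, ENNReal.ofReal (gExp n x) := by
  refine ⟨diffFn_gExp_apply n, ?_⟩
  simp_rw [diffFn_gExp_apply, Real.exp_neg_sum, gExp_eq_prod]
  rw [lintegral_ofReal_prod_eq_pow (f := fun t ↦ Real.exp (-|t|)) measurable_abs.neg.exp
      fun _ ↦ (Real.exp_pos _).le,
    lintegral_ofReal_prod_eq_pow measurable_oneSidedExp oneSidedExp_nonneg,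
    lintegral_exp_neg_abs, mul_pow]

/-- For `g` as above, `Δg(z) = e^{−(|z₁|+⋯+|zₙ|)}` and
`∫ Δg = 2^n ∫ g`: the inequality of the functional Rogers–Shephard theorem is sharp. -/
theorem diffFn_gExp (n : ℕ) (hn : 1 ≤ n) :
    (∀ z : Fin n → ℝ, diffFn (gExp n) z = ENNReal.ofReal (Real.exp (-(∑ i, |z i|)))) ∧
    ∫⁻ z, diffFn (gExp n) z = 2 ^ n * ∫⁻ x, ENNReal.ofReal (gExp n x) :=
  diffFn_gExp_general n
end

section
/- Let f : ℝ^n → ℝ be a nonnegative log-concave function such that the interior of P_f is nonempty. Define f̄ : ℝ^n → ℝ by f̄(x) = f(x) if x is in the interior of P_f, f̄(x) = limsup_{y → x, y ∈ int(P_f)} f(y) if x is on the boundary of P_f, and f̄(x) = 0 otherwise. Then f̄ is log-concave on ℝ^n. -/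
open MeasureTheory Set Filter
open scoped ENNReal Topology Classical

/-! On the open convex set `U = int P_f` the function `log f` is concave, hence `f` is continuous
there, so `f̄` is the upper semicontinuous envelope `x ↦ limsup_{y → x, y ∈ U} f y` of `f|_U`,
cut off outside `closure U`. Log-concavity passes to this envelope: if `f > a` frequently near `x`
and `f > b` frequently near `y` (within `U`), then by log-concavity of `f` and convexity of `U`,
`f ≥ a^(1-t) b^t` frequently near `(1-t) x + t y`. The limsup is finite because a log-concave
function that is bounded below by `m > 0` near `p` is bounded above near every `z`:
`f u · m ≤ f ((z + p) / 2) ^ 2` whenever `f (z + p - u) ≥ m`. -/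

theorem rpow_mul_rpow_le_of_forall_lt {A B C t : ℝ} (hA : 0 < A) (hB : 0 < B)
    (h : ∀ a b, 0 < a → a < A → 0 < b → b < B → a ^ (1 - t) * b ^ t ≤ C) :
    A ^ (1 - t) * B ^ t ≤ C := by
  have hscale : ∀ s : ℝ, 0 < s → (s * A) ^ (1 - t) * (s * B) ^ t = s * (A ^ (1 - t) * B ^ t) := by
    intro s hs
    rw [Real.mul_rpow hs.le hA.le, Real.mul_rpow hs.le hB.le,
      mul_mul_mul_comm, ← Real.rpow_add hs, sub_add_cancel, Real.rpow_one]
  have hlim : Tendsto (fun s : ℝ => s * (A ^ (1 - t) * B ^ t)) (𝓝[<] 1) (𝓝 (A ^ (1 - t) * B ^ t)) :=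
    ((continuous_id.mul continuous_const).tendsto' 1 _ (one_mul _)).mono_left nhdsWithin_le_nhds
  refine le_of_tendsto hlim ?_
  filter_upwards [Ioo_mem_nhdsLT zero_lt_one] with s hs
  rw [← hscale s hs.1]
  exact h _ _ (mul_pos hs.1 hA) (mul_lt_of_lt_one_left hA hs.2)
    (mul_pos hs.1 hB) (mul_lt_of_lt_one_left hB hs.2)

theorem ite_interior_frontier_eq_indicator {X : Type*} [TopologicalSpace X] {P : Set X}
    {f : X → ℝ} (hf : ContinuousOn f (interior P)) (hP : closure (interior P) = closure P)
    (x : X) :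
    (if x ∈ interior P then f x
      else if x ∈ frontier P then limsup f (𝓝[interior P] x) else 0) =
      (closure (interior P)).indicator (fun x => limsup f (𝓝[interior P] x)) x := by
  by_cases hxU : x ∈ interior P
  · have hnhds : 𝓝[interior P] x = 𝓝 x := nhdsWithin_eq_nhds.mpr (isOpen_interior.mem_nhds hxU)
    rw [if_pos hxU, indicator_of_mem (subset_closure hxU), hnhds,
      (hf.continuousAt (isOpen_interior.mem_nhds hxU)).tendsto.limsup_eq]
  · rw [if_neg hxU, hP, closure_eq_interior_union_frontier]
    by_cases hxF : x ∈ frontier P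
    · rw [if_pos hxF, indicator_of_mem (mem_union_right _ hxF)]
    · rw [if_neg hxF, indicator_of_notMem (by simp [hxU, hxF])]

theorem Convex.tendsto_combo_nhdsWithin_prod {E : Type*} [AddCommGroup E] [Module ℝ E]
    [TopologicalSpace E] [ContinuousAdd E] [ContinuousConstSMul ℝ E] {U : Set E}
    (hU : Convex ℝ U) {t : ℝ} (ht : t ∈ Icc (0 : ℝ) 1) (x y : E) :
    Tendsto (fun q : E × E => (1 - t) • q.1 + t • q.2)
      (𝓝[U] x ×ˢ 𝓝[U] y) (𝓝[U] ((1 - t) • x + t • y)) := by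
  rw [← nhdsWithin_prod_eq]
  exact (Continuous.continuousWithinAt (by fun_prop)).tendsto_nhdsWithin
    fun q hq => hU hq.1 hq.2 (by linarith [ht.2]) ht.1 (by ring)

namespace LogConcaveFn

variable {n : ℕ} {f : (Fin n → ℝ) → ℝ}

theorem of_pos {g : (Fin n → ℝ) → ℝ} (hg0 : ∀ x, 0 ≤ g x)
    (h : ∀ x y t, t ∈ Icc (0 : ℝ) 1 → 0 < g x → 0 < g y →
      g x ^ (1 - t) * g y ^ t ≤ g ((1 - t) • x + t • y)) :
    LogConcaveFn g := by
  intro x y t ht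
  rcases (hg0 x).eq_or_lt with hx | hx
  · rcases ht.2.eq_or_lt with rfl | ht1
    · simp
    · rw [← hx, Real.zero_rpow (by linarith), zero_mul]
      exact hg0 _
  rcases (hg0 y).eq_or_lt with hy | hy
  · rcases ht.1.eq_or_lt with rfl | ht0
    · simp
    · rw [← hy, Real.zero_rpow ht0.ne', mul_zero]
      exact hg0 _
  exact h x y t ht hx hy

theorem convex_setOf_pos (hf : LogConcaveFn f) : Convex ℝ {x | 0 < f x} := by
  intro x hx y hy s r hs hr hsr
  obtain rfl : s = 1 - r := by linarith
  exact (mul_pos (Real.rpow_pos_of_pos hx _) (Real.rpow_pos_of_pos hy _)).trans_le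
    (hf x y r ⟨hr, by linarith⟩)

theorem concaveOn_log (hf : LogConcaveFn f) :
    ConcaveOn ℝ {x | 0 < f x} fun x => Real.log (f x) := by
  refine ⟨hf.convex_setOf_pos, fun x hx y hy s r hs hr hsr => ?_⟩
  obtain rfl : s = 1 - r := by linarith
  have hx' : 0 < f x ^ (1 - r) := Real.rpow_pos_of_pos hx _
  have hy' : 0 < f y ^ r := Real.rpow_pos_of_pos hy _
  have hlog := Real.log_le_log (mul_pos hx' hy') (hf x y r ⟨hr, by linarith⟩)
  rwa [Real.log_mul hx'.ne' hy'.ne', Real.log_rpow hx, Real.log_rpow hy] at hlog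

theorem continuousOn_interior (hf : LogConcaveFn f) :
    ContinuousOn f (interior {x | 0 < f x}) := by
  refine (Real.continuous_exp.comp_continuousOn hf.concaveOn_log.continuousOn_interior).congr
    fun x hx => ?_
  have hfx : x ∈ {x | 0 < f x} := interior_subset hx
  exact (Real.exp_log hfx).symm

theorem isBoundedUnder_nhds (hf : LogConcaveFn f) (hf0 : ∀ x, 0 ≤ f x) {p : Fin n → ℝ}
    {m : ℝ} (hm : 0 < m) (hp : ∀ᶠ v in 𝓝 p, m ≤ f v) (z : Fin n → ℝ) :
    IsBoundedUnder (· ≤ ·) (𝓝 z) f := by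
  set w : Fin n → ℝ := (1 / 2 : ℝ) • (z + p)
  have hreflect : Tendsto (fun u => z + p - u) (𝓝 z) (𝓝 p) := by
    have := (tendsto_const_nhds (x := z + p)).sub (tendsto_id (x := 𝓝 z))
    rwa [add_sub_cancel_left] at this
  refine ⟨f w ^ 2 / m, eventually_map.mpr ?_⟩
  filter_upwards [hreflect.eventually hp] with u hu
  have hmid : (1 - 1 / 2 : ℝ) • u + (1 / 2 : ℝ) • (z + p - u) = w := by
    rw [show (1 - 1 / 2 : ℝ) = 1 / 2 by norm_num, ← smul_add, add_sub_cancel]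
  have hineq := hf u (z + p - u) (1 / 2) ⟨by norm_num, by norm_num⟩
  rw [hmid, show (1 - 1 / 2 : ℝ) = 1 / 2 by norm_num, ← Real.sqrt_eq_rpow, ← Real.sqrt_eq_rpow,
    ← Real.sqrt_mul (hf0 u)] at hineq
  rw [le_div_iff₀ hm]
  calc f u * m ≤ f u * f (z + p - u) := mul_le_mul_of_nonneg_left hu (hf0 u)
    _ ≤ f w ^ 2 := (Real.sqrt_le_iff.mp hineq).2

variable {U : Set (Fin n → ℝ)}

theorem frequently_rpow_mul_rpow_le (hf : LogConcaveFn f) (hU : Convex ℝ U) {t : ℝ}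
    (ht : t ∈ Icc (0 : ℝ) 1) {x y : Fin n → ℝ} {a b : ℝ} (ha : 0 ≤ a) (hb : 0 ≤ b)
    (hx : ∃ᶠ x' in 𝓝[U] x, a < f x') (hy : ∃ᶠ y' in 𝓝[U] y, b < f y') :
    ∃ᶠ w in 𝓝[U] ((1 - t) • x + t • y), a ^ (1 - t) * b ^ t ≤ f w := by
  refine (hU.tendsto_combo_nhdsWithin_prod ht x y).frequently_map _ ?_
    (frequently_prod_and.mpr ⟨hx, hy⟩)
  rintro ⟨x', y'⟩ ⟨hx', hy'⟩
  refine le_trans ?_ (hf x' y' t ht)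
  exact mul_le_mul (Real.rpow_le_rpow ha hx'.le (by linarith [ht.2]))
    (Real.rpow_le_rpow hb hy'.le ht.1) (Real.rpow_nonneg hb _)
    (Real.rpow_nonneg (ha.trans hx'.le) _)

theorem limsup_rpow_mul_rpow_le (hf : LogConcaveFn f) (hf0 : ∀ x, 0 ≤ f x) (hU : Convex ℝ U)
    {t : ℝ} (ht : t ∈ Icc (0 : ℝ) 1) {x y : Fin n → ℝ} (hxU : x ∈ closure U) (hyU : y ∈ closure U)
    (hx : 0 < limsup f (𝓝[U] x)) (hy : 0 < limsup f (𝓝[U] y))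
    (hbdd : IsBoundedUnder (· ≤ ·) (𝓝 ((1 - t) • x + t • y)) f) :
    limsup f (𝓝[U] x) ^ (1 - t) * limsup f (𝓝[U] y) ^ t ≤
      limsup f (𝓝[U] ((1 - t) • x + t • y)) := by
  have hcobdd (z : Fin n → ℝ) (hz : z ∈ closure U) : IsCoboundedUnder (· ≤ ·) (𝓝[U] z) f :=
    have : (𝓝[U] z).NeBot := mem_closure_iff_nhdsWithin_neBot.mp hz
    isCoboundedUnder_le_of_le _ hf0
  refine rpow_mul_rpow_le_of_forall_lt hx hy fun a b ha hax hb hby => ?_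
  refine le_limsup_of_frequently_le ?_ (hbdd.mono nhdsWithin_le_nhds)
  exact hf.frequently_rpow_mul_rpow_le hU ht ha.le hb.le
    (frequently_lt_of_lt_limsup (hcobdd x hxU) hax)
    (frequently_lt_of_lt_limsup (hcobdd y hyU) hby)

theorem indicator_closure_limsup (hf : LogConcaveFn f) (hf0 : ∀ x, 0 ≤ f x) (hU : Convex ℝ U)
    (hbdd : ∀ z, IsBoundedUnder (· ≤ ·) (𝓝 z) f) :
    LogConcaveFn ((closure U).indicator fun x => limsup f (𝓝[U] x)) := by
  have hnonneg : ∀ z ∈ closure U, 0 ≤ limsup f (𝓝[U] z) := fun z hz =>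
    have : (𝓝[U] z).NeBot := mem_closure_iff_nhdsWithin_neBot.mp hz
    le_limsup_of_frequently_le (Frequently.of_forall hf0) ((hbdd z).mono nhdsWithin_le_nhds)
  refine of_pos (fun z => indicator_nonneg hnonneg z) fun x y t ht hx hy => ?_
  have hxU := mem_of_indicator_ne_zero hx.ne'
  have hyU := mem_of_indicator_ne_zero hy.ne'
  rw [indicator_of_mem hxU] at hx ⊢
  rw [indicator_of_mem hyU] at hy ⊢
  rw [indicator_of_mem (hU.closure hxU hyU (by linarith [ht.2]) ht.1 (by ring))]
  exact hf.limsup_rpow_mul_rpow_le hf0 hU ht hxU hyU hx hy (hbdd _)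

end LogConcaveFn

/-- If `f` is nonnegative and log-concave with `P_f = {f > 0}` of nonempty interior,
then the function `f̄`, equal to `f` on the interior of `P_f`, to
`limsup_{y → x, y ∈ int P_f} f(y)` on the boundary of `P_f` and `0` elsewhere,
is log-concave. -/
theorem fbar_logConcave {n : ℕ} (f : (Fin n → ℝ) → ℝ)
    (hf0 : ∀ x, 0 ≤ f x) (hf : LogConcaveFn f)
    (hP : (interior {x : Fin n → ℝ | 0 < f x}).Nonempty) :
    LogConcaveFn (fun x =>
      if x ∈ interior {y : Fin n → ℝ | 0 < f y} then f x
      else if x ∈ frontier {y : Fin n → ℝ | 0 < f y} then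
        Filter.limsup f (𝓝[interior {y : Fin n → ℝ | 0 < f y}] x)
      else 0) := by
  obtain ⟨p, hp⟩ := hP
  have hcont := hf.continuousOn_interior
  have hfp : p ∈ {x | 0 < f x} := interior_subset hp
  have hbdd := hf.isBoundedUnder_nhds hf0 (half_pos hfp)
    ((hcont.continuousAt (isOpen_interior.mem_nhds hp)).eventually
      (eventually_ge_nhds (half_lt_self hfp)))
  have hclosure := hf.convex_setOf_pos.closure_interior_eq_closure_of_nonempty_interior ⟨p, hp⟩
  simp_rw [ite_interior_frontier_eq_indicator hcont hclosure]
  exact hf.indicator_closure_limsup hf0 hf.convex_setOf_pos.interior hbdd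
end

section
/- Let f : ℝ^n → ℝ be a nonnegative log-concave function such that the interior of P_f is nonempty. Then sup_{x ∈ ℝ^n} f(x) equals the essential supremum of f over ℝ^n with respect to Lebesgue measure. -/
open MeasureTheory Set
open scoped ENNReal

/-!
Let `f(y) > 0`. Since `{f > 0}` contains an open set, some superlevel set `A = {f ≥ ε}`, `ε > 0`,
has positive measure. Log-concavity gives `f ≥ ε^(1-t) f(y)^t` on the image of `A` under the
homothety of centre `y` and ratio `1 - t`, which still has positive measure for `t < 1`. Letting
`t → 1`, every value below `f(y)` is exceeded on a set of positive measure, so `f(y)` is at most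
the essential supremum.
-/

open Filter Topology

theorem exists_pos_measure_setOf_le {α : Type*} [MeasurableSpace α] {μ : Measure α}
    {g : α → ℝ} (hg : μ {x | 0 < g x} ≠ 0) : ∃ ε > 0, μ {x | ε ≤ g x} ≠ 0 := by
  have hcover : {x | 0 < g x} ⊆ ⋃ k : ℕ, {x | 1 / ((k : ℝ) + 1) ≤ g x} := fun x hx =>
    let ⟨k, hk⟩ := exists_nat_one_div_lt (show 0 < g x from hx)
    mem_iUnion.2 ⟨k, hk.le⟩
  obtain ⟨k, hk⟩ := exists_measure_pos_of_not_measure_iUnion_null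
    fun h => hg (measure_mono_null hcover h)
  exact ⟨_, Nat.one_div_pos_of_nat, hk.ne'⟩

theorem tendsto_rpow_one_sub_mul_rpow {ε : ℝ} (hε : 0 < ε) (a : ℝ) :
    Tendsto (fun t : ℝ => ε ^ (1 - t) * a ^ t) (𝓝 1) (𝓝 a) := by
  have hcont : ContinuousAt (fun t : ℝ => ε ^ (1 - t) * a ^ t) 1 :=
    ((Real.continuousAt_const_rpow hε.ne').comp (continuousAt_const.sub continuousAt_id)).mul
      (Real.continuousAt_const_rpow' one_ne_zero)
  simpa using hcont.tendsto

namespace LogConcaveFn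

variable {n : ℕ} {f : (Fin n → ℝ) → ℝ}

theorem rpow_mul_rpow_le_apply_homothety (hf : LogConcaveFn f) {ε t : ℝ} {y z : Fin n → ℝ}
    (hε : 0 ≤ ε) (hz : ε ≤ f z) (hy : 0 ≤ f y) (ht : t ∈ Icc (0 : ℝ) 1) :
    ε ^ (1 - t) * f y ^ t ≤ f (AffineMap.homothety y (1 - t) z) := by
  have hhom : AffineMap.homothety y (1 - t) z = (1 - t) • z + t • y := by
    rw [AffineMap.homothety_apply, vsub_eq_sub, vadd_eq_add, smul_sub]
    module
  rw [hhom]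
  refine le_trans ?_ (hf z y t ht)
  gcongr
  linarith [ht.2]

theorem volume_setOf_rpow_mul_rpow_le_ne_zero (hf : LogConcaveFn f) {ε t : ℝ}
    {y : Fin n → ℝ} (hε : 0 ≤ ε) (hy : 0 ≤ f y) (ht : t ∈ Ico (0 : ℝ) 1)
    (hA : volume {z | ε ≤ f z} ≠ 0) :
    volume {z | ε ^ (1 - t) * f y ^ t ≤ f z} ≠ 0 := by
  have hsub : AffineMap.homothety y (1 - t) '' {z | ε ≤ f z} ⊆
      {z | ε ^ (1 - t) * f y ^ t ≤ f z} := by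
    rintro _ ⟨z, hz, rfl⟩
    exact hf.rpow_mul_rpow_le_apply_homothety hε hz hy (Ico_subset_Icc_self ht)
  have hratio : (1 - t) ^ Module.finrank ℝ (Fin n → ℝ) ≠ 0 := pow_ne_zero _ (by linarith [ht.2])
  refine fun h => ?_
  have himage := measure_mono_null hsub h
  rw [Measure.addHaar_image_homothety, mul_eq_zero, ENNReal.ofReal_eq_zero] at himage
  exact himage.elim (fun h => (abs_pos.2 hratio).not_ge h) hA

/-- If `f` is nonnegative and log-concave with `P_f = {f > 0}` of nonempty interior,
then the supremum of `f` coincides with its essential supremum with respect to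
Lebesgue measure. -/
theorem iSup_eq_essSup {n : ℕ} (f : (Fin n → ℝ) → ℝ)
    (hf : LogConcaveFn f)
    (hP : (interior {x : Fin n → ℝ | 0 < f x}).Nonempty) :
    (⨆ x, ENNReal.ofReal (f x)) =
      essSup (fun x => ENNReal.ofReal (f x)) volume := by
  refine _root_.iSup_eq_essSup fun y a ha => ?_
  have hy : 0 < f y := ENNReal.ofReal_pos.1 (pos_of_gt ha)
  have hpos : volume {x | 0 < f x} ≠ 0 :=
    fun h => (isOpen_interior.measure_pos volume hP).ne' (measure_mono_null interior_subset h)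
  obtain ⟨ε, hε, hA⟩ := exists_pos_measure_setOf_le hpos
  have hnear : ∀ᶠ t in 𝓝[<] (1 : ℝ), a < ENNReal.ofReal (ε ^ (1 - t) * f y ^ t) :=
    (ENNReal.tendsto_ofReal (tendsto_rpow_one_sub_mul_rpow hε (f y))
      |>.mono_left nhdsWithin_le_nhds).eventually_const_lt ha
  obtain ⟨t, hat, ht⟩ := (hnear.and (Ioo_mem_nhdsLT one_pos)).exists
  have hlevel := hf.volume_setOf_rpow_mul_rpow_le_ne_zero hε.le hy.le (Ioo_subset_Ico_self ht) hA
  exact fun h => hlevel (measure_mono_null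
    (fun z hz => hat.trans_le (ENNReal.ofReal_le_ofReal hz)) h)

end LogConcaveFn
end

section
/- Let f : ℝ^n → ℝ be a nonnegative log-concave function with f ∈ L¹(ℝ^n). Then for every z ∈ ℝ^n, ∫_{ℝ^n} f(x − z) f(x) dx ≥ 2^{−n} · Δf(z) · ∫_{ℝ^n} f(x) dx. -/
open MeasureTheory Set
open scoped ENNReal

/-!
Fix `x, y` with `(x + y) / 2 = z` and substitute `v = 2u - x`. Then `u` is the midpoint of `x`
and `v`, and `u - z` the midpoint of `-y` and `v`, so log-concavity at `t = 1/2` gives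
`f(u - z) f(u) ≥ √(f(-y) f(v)) √(f(x) f(v)) = √(f(x) f(-y)) f(v)`.
Integrating in `u`, the change of variables `v = 2u - x` costs the Jacobian factor `2^{-n}`;
taking the supremum over `x, y` yields `Δf(z)`.
-/

open Module

section Scaling

variable {E : Type*} [NormedAddCommGroup E] [NormedSpace ℝ E] [MeasurableSpace E] [BorelSpace E]
  [FiniteDimensional ℝ E] (μ : Measure E) [μ.IsAddHaarMeasure]

theorem lintegral_comp_smul (g : E → ℝ≥0∞) {R : ℝ} (hR : R ≠ 0) :
    ∫⁻ x, g (R • x) ∂μ = ENNReal.ofReal |(R ^ finrank ℝ E)⁻¹| * ∫⁻ x, g x ∂μ :=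
  calc ∫⁻ x, g (R • x) ∂μ = ∫⁻ y, g y ∂μ.map (R • ·) :=
        (lintegral_map_equiv g
          (Homeomorph.smul (isUnit_iff_ne_zero.2 hR).unit).toMeasurableEquiv).symm
    _ = _ := by rw [Measure.map_addHaar_smul μ hR, lintegral_smul_measure, smul_eq_mul]

theorem lintegral_comp_smul_sub (g : E → ℝ≥0∞) {R : ℝ} (hR : R ≠ 0) (a : E) :
    ∫⁻ x, g (R • x - a) ∂μ = ENNReal.ofReal |(R ^ finrank ℝ E)⁻¹| * ∫⁻ x, g x ∂μ := by
  have hshift : ∀ x : E, R • x - a = R • (x - R⁻¹ • a) := fun x => by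
    rw [smul_sub, smul_inv_smul₀ hR]
  simp_rw [hshift]
  rw [lintegral_sub_right_eq_self (fun x => g (R • x)), lintegral_comp_smul μ g hR]

end Scaling

namespace LogConcaveFn

variable {n : ℕ} {f : (Fin n → ℝ) → ℝ}

theorem sqrt_mul_le_midpoint (hf0 : ∀ x, 0 ≤ f x) (hf : LogConcaveFn f) (a b : Fin n → ℝ) :
    √(f a * f b) ≤ f ((1 / 2 : ℝ) • (a + b)) := by
  have h := hf a b (1 / 2) (by norm_num)
  rw [Real.sqrt_mul (hf0 a), Real.sqrt_eq_rpow, Real.sqrt_eq_rpow]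
  convert h using 3 <;> norm_num [smul_add]

theorem sqrt_mul_mul_le (hf0 : ∀ x, 0 ≤ f x) (hf : LogConcaveFn f) {x y z : Fin n → ℝ}
    (hxy : (1 / 2 : ℝ) • (x + y) = z) (u : Fin n → ℝ) :
    √(f x * f (-y)) * f ((2 : ℝ) • u - x) ≤ f (u - z) * f u := by
  set v := (2 : ℝ) • u - x
  have hu : (1 / 2 : ℝ) • (x + v) = u := by simp only [v]; module
  have huz : (1 / 2 : ℝ) • (-y + v) = u - z := by rw [← hxy]; simp only [v]; module
  have hsplit : √(f x * f (-y)) * f v = √(f (-y) * f v) * √(f x * f v) := by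
    rw [Real.sqrt_mul (hf0 x), Real.sqrt_mul (hf0 _), Real.sqrt_mul (hf0 x)]
    linear_combination -(√(f x) * √(f (-y))) * Real.mul_self_sqrt (hf0 v)
  rw [hsplit]
  refine mul_le_mul ?_ ?_ (Real.sqrt_nonneg _) (hf0 _)
  · simpa only [huz] using sqrt_mul_le_midpoint hf0 hf (-y) v
  · simpa only [hu] using sqrt_mul_le_midpoint hf0 hf x v

end LogConcaveFn

theorem autoconvolution_ge_general {n : ℕ} (f : (Fin n → ℝ) → ℝ)
    (hf0 : ∀ x, 0 ≤ f x) (hf : LogConcaveFn f) :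
    ∀ z : Fin n → ℝ,
      (2 ^ n : ℝ≥0∞)⁻¹ * diffFn f z * ∫⁻ x, ENNReal.ofReal (f x) ≤
        ∫⁻ x, ENNReal.ofReal (f (x - z) * f x) := by
  intro z
  rw [diffFn, mul_comm _ (sSup _), mul_assoc, ENNReal.sSup_mul]
  refine iSup₂_le ?_
  rintro _ ⟨x, y, hxy, rfl⟩
  have hscale : ∫⁻ u, ENNReal.ofReal (f ((2 : ℝ) • u - x)) =
      (2 ^ n : ℝ≥0∞)⁻¹ * ∫⁻ v, ENNReal.ofReal (f v) := by
    rw [lintegral_comp_smul_sub volume (fun v => ENNReal.ofReal (f v)) two_ne_zero,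
      finrank_fin_fun, abs_of_pos (by positivity), ENNReal.ofReal_inv_of_pos (by positivity),
      ENNReal.ofReal_pow zero_le_two, ENNReal.ofReal_ofNat]
  calc ENNReal.ofReal √(f x * f (-y)) * ((2 ^ n : ℝ≥0∞)⁻¹ * ∫⁻ v, ENNReal.ofReal (f v))
      = ∫⁻ u, ENNReal.ofReal √(f x * f (-y)) * ENNReal.ofReal (f ((2 : ℝ) • u - x)) := by
        rw [← hscale, lintegral_const_mul' _ _ ENNReal.ofReal_ne_top]
    _ ≤ ∫⁻ u, ENNReal.ofReal (f (u - z) * f u) := lintegral_mono fun u => by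
        rw [← ENNReal.ofReal_mul (Real.sqrt_nonneg _)]
        exact ENNReal.ofReal_le_ofReal (hf.sqrt_mul_mul_le hf0 hxy u)

/-- If `f` is nonnegative, log-concave and integrable, then for every `z`,
`∫ f(x−z) f(x) dx ≥ 2^{−n} · Δf(z) · ∫ f(x) dx`. -/
theorem autoconvolution_ge {n : ℕ} (f : (Fin n → ℝ) → ℝ)
    (hf0 : ∀ x, 0 ≤ f x) (hf : LogConcaveFn f) (hint : Integrable f) :
    ∀ z : Fin n → ℝ,
      (2 ^ n : ℝ≥0∞)⁻¹ * diffFn f z * ∫⁻ x, ENNReal.ofReal (f x) ≤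
        ∫⁻ x, ENNReal.ofReal (f (x - z) * f x) :=
  autoconvolution_ge_general f hf0 hf
end

section
/- Let K be a convex body in ℝ^n with 0 in its interior. Then ∫_{ℝ^n} e^{−h_K(x)} dx = n! · V_n(K*), where h_K is the support function of K and K* is the polar body of K. -/
/-!
Writing `e^{-h(x)} = ∫_{h(x)}^∞ e^{-t} dt` and exchanging the order of integration gives
`∫ e^{-h} = ∫_0^∞ e^{-t} V_n({h ≤ t}) dt` for any measurable `h ≥ 0`. The support function is
positively homogeneous, so `{h_K ≤ t} = t K*` has volume `tⁿ V_n(K*)`, and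
`∫_0^∞ e^{-t} tⁿ dt = Γ(n + 1) = n!`.
-/

open MeasureTheory Set
open scoped ENNReal

/-- The support function of a set `K ⊆ ℝⁿ`: `h_K(x) = sup_{y ∈ K} ⟨x, y⟩`. -/
noncomputable def suppFn {n : ℕ} (K : Set (Fin n → ℝ)) (x : Fin n → ℝ) : ℝ :=
  sSup ((fun y => ∑ i, x i * y i) '' K)

/-- The polar body of `K`: `K* = {x : ⟨x, y⟩ ≤ 1 for all y ∈ K}`. -/
def polarSet {n : ℕ} (K : Set (Fin n → ℝ)) : Set (Fin n → ℝ) :=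
  {x | ∀ y ∈ K, ∑ i, x i * y i ≤ 1}

open scoped Nat Pointwise

section LayerCake

variable {α : Type*} [MeasurableSpace α]

lemma lintegral_exp_neg_Ici (a : ℝ) :
    ∫⁻ t in Ici a, ENNReal.ofReal (Real.exp (-t)) = ENNReal.ofReal (Real.exp (-a)) := by
  have hint : IntegrableOn (fun t : ℝ => Real.exp (-t)) (Ioi a) := by
    simpa using exp_neg_integrableOn_Ioi a one_pos
  rw [← Measure.restrict_congr_set Ioi_ae_eq_Ici, ← integral_exp_neg_Ioi,
    ofReal_integral_eq_lintegral_ofReal hint (ae_of_all _ fun t => (Real.exp_pos _).le)]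

lemma lintegral_exp_neg_mul_pow (n : ℕ) :
    ∫⁻ t in Ioi (0 : ℝ), ENNReal.ofReal (Real.exp (-t) * t ^ n) = n ! := by
  have hs : (0 : ℝ) < n + 1 := by positivity
  have hconv := Real.GammaIntegral_convergent hs
  have hGamma := Real.Gamma_eq_integral hs
  simp only [add_sub_cancel_right, Real.rpow_natCast, Real.Gamma_nat_eq_factorial] at hconv hGamma
  rw [← ofReal_integral_eq_lintegral_ofReal hconv, ← hGamma, ENNReal.ofReal_natCast]
  exact (ae_restrict_iff' measurableSet_Ioi).2 (ae_of_all _ fun t (ht : 0 < t) => by positivity)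

lemma lintegral_exp_neg_eq_lintegral_measure_le (μ : Measure α) [SFinite μ] {f : α → ℝ}
    (hf : Measurable f) :
    ∫⁻ x, ENNReal.ofReal (Real.exp (-f x)) ∂μ =
      ∫⁻ t, ENNReal.ofReal (Real.exp (-t)) * μ {x | f x ≤ t} := by
  set E : Set (α × ℝ) := {p | f p.1 ≤ p.2}
  set g : α × ℝ → ℝ≥0∞ := fun p => ENNReal.ofReal (Real.exp (-p.2))
  have hE : MeasurableSet E := measurableSet_le (hf.comp measurable_fst) measurable_snd
  have hg : Measurable g :=
    ENNReal.measurable_ofReal.comp (Real.measurable_exp.comp measurable_snd.neg)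
  calc ∫⁻ x, ENNReal.ofReal (Real.exp (-f x)) ∂μ
      = ∫⁻ x, ∫⁻ t, E.indicator g (x, t) ∂volume ∂μ := by
        refine lintegral_congr fun x => ?_
        rw [← lintegral_exp_neg_Ici, ← lintegral_indicator measurableSet_Ici]
        rfl
    _ = ∫⁻ t, ∫⁻ x, E.indicator g (x, t) ∂μ ∂volume :=
        lintegral_lintegral_swap ((hg.indicator hE).aemeasurable (μ := μ.prod volume))
    _ = ∫⁻ t, ENNReal.ofReal (Real.exp (-t)) * μ {x | f x ≤ t} := by
        refine lintegral_congr fun t => ?_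
        rw [← lintegral_indicator_const (measurableSet_le hf measurable_const)]
        rfl

lemma lintegral_exp_neg_of_measure_le_eq_pow_mul {μ : Measure α} [SFinite μ] {f : α → ℝ}
    (hf : Measurable f) (hf_nonneg : ∀ x, 0 ≤ f x) {n : ℕ} {V : ℝ≥0∞}
    (hV : ∀ t > 0, μ {x | f x ≤ t} = ENNReal.ofReal (t ^ n) * V) :
    ∫⁻ x, ENNReal.ofReal (Real.exp (-f x)) ∂μ = n ! * V := by
  have hsupp : (fun t => ENNReal.ofReal (Real.exp (-t)) * μ {x | f x ≤ t}).support ⊆ Ici 0 := by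
    intro t ht
    by_contra hneg
    have hempty : {x | f x ≤ t} = ∅ :=
      eq_empty_of_forall_notMem fun x hx => hneg (le_trans (hf_nonneg x) hx)
    simp [hempty] at ht
  have hmeas : Measurable fun t : ℝ => ENNReal.ofReal (Real.exp (-t) * t ^ n) := by
    fun_prop
  rw [lintegral_exp_neg_eq_lintegral_measure_le μ hf, ← setLIntegral_eq_of_support_subset hsupp,
    ← Measure.restrict_congr_set Ioi_ae_eq_Ici,
    setLIntegral_congr_fun measurableSet_Ioi fun t ht => by
      rw [hV t ht, ← mul_assoc, ← ENNReal.ofReal_mul (Real.exp_pos _).le],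
    lintegral_mul_const _ hmeas, lintegral_exp_neg_mul_pow]

end LayerCake

section SupportFunction

variable {n : ℕ} {K : Set (Fin n → ℝ)}

lemma bddAbove_image_sum_mul (hK : Bornology.IsBounded K) (x : Fin n → ℝ) :
    BddAbove ((fun y => ∑ i, x i * y i) '' K) := by
  have hcont : Continuous fun y : Fin n → ℝ => ∑ i, x i * y i := by fun_prop
  exact (hK.isCompact_closure.bddAbove_image hcont.continuousOn).mono (image_mono subset_closure)

lemma suppFn_nonneg (hK : Bornology.IsBounded K) (h0 : 0 ∈ K) (x : Fin n → ℝ) :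
    0 ≤ suppFn K x :=
  le_csSup (bddAbove_image_sum_mul hK x) ⟨0, h0, by simp⟩

lemma suppFn_le_iff (hK : Bornology.IsBounded K) (hne : K.Nonempty) {x : Fin n → ℝ} {t : ℝ} :
    suppFn K x ≤ t ↔ ∀ y ∈ K, ∑ i, x i * y i ≤ t := by
  rw [suppFn, csSup_le_iff (bddAbove_image_sum_mul hK x) (hne.image _), forall_mem_image]

lemma lowerSemicontinuous_suppFn (hK : Bornology.IsBounded K) :
    LowerSemicontinuous (suppFn K) := by
  have hiSup : suppFn K = fun x => ⨆ y : K, ∑ i, x i * (y : Fin n → ℝ) i :=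
    funext fun x => sSup_image'
  rw [hiSup]
  refine lowerSemicontinuous_ciSup (fun x => ?_) fun y => Continuous.lowerSemicontinuous ?_
  · simpa only [image_eq_range] using bddAbove_image_sum_mul hK x
  · fun_prop

lemma setOf_suppFn_le_eq_smul_polarSet (hK : Bornology.IsBounded K) (hne : K.Nonempty) {t : ℝ}
    (ht : 0 < t) : {x | suppFn K x ≤ t} = t • polarSet K := by
  ext x
  have hscale : ∀ y : Fin n → ℝ, ∑ i, (t⁻¹ • x) i * y i = t⁻¹ * ∑ i, x i * y i := by
    intro y
    simp only [Pi.smul_apply, smul_eq_mul, Finset.mul_sum, mul_assoc]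
  simp only [mem_smul_set_iff_inv_smul_mem₀ ht.ne', mem_ofPred_eq, suppFn_le_iff hK hne, polarSet,
    hscale, inv_mul_le_one₀ ht]

lemma volume_setOf_suppFn_le (hK : Bornology.IsBounded K) (hne : K.Nonempty) {t : ℝ} (ht : 0 < t) :
    volume {x | suppFn K x ≤ t} = ENNReal.ofReal (t ^ n) * volume (polarSet K) := by
  rw [setOf_suppFn_le_eq_smul_polarSet hK hne ht, Measure.addHaar_smul_of_nonneg volume ht.le,
    Module.finrank_fin_fun]

end SupportFunction

theorem integral_exp_neg_suppFn_general {n : ℕ} (K : Set (Fin n → ℝ))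
    (hKcomp : IsCompact K) (h0 : 0 ∈ interior K) :
    ∫ x, Real.exp (-(suppFn K x)) =
      (Nat.factorial n : ℝ) * (volume (polarSet K)).toReal := by
  have hK := hKcomp.isBounded
  have h0K : 0 ∈ K := interior_subset h0
  have hmeas : Measurable (suppFn K) := (lowerSemicontinuous_suppFn hK).measurable
  rw [integral_eq_lintegral_of_nonneg_ae (ae_of_all _ fun x => (Real.exp_pos _).le)
      (by fun_prop : Measurable fun x => Real.exp (-suppFn K x)).aestronglyMeasurable,
    lintegral_exp_neg_of_measure_le_eq_pow_mul hmeas (suppFn_nonneg hK h0K)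
      fun t ht => volume_setOf_suppFn_le hK ⟨0, h0K⟩ ht,
    ENNReal.toReal_mul, ENNReal.toReal_natCast]

/-- For a convex body `K` in `ℝⁿ` with `0` in its interior,
`∫ e^{−h_K(x)} dx = n! · V_n(K*)`. -/
theorem integral_exp_neg_suppFn {n : ℕ} (K : Set (Fin n → ℝ))
    (hKcomp : IsCompact K) (hKconv : Convex ℝ K) (h0 : 0 ∈ interior K) :
    ∫ x, Real.exp (-(suppFn K x)) =
      (Nat.factorial n : ℝ) * (volume (polarSet K)).toReal :=
  integral_exp_neg_suppFn_general K hKcomp h0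
end

section
/- Let K be a convex body in ℝ^n with 0 in its interior, and let f = e^{−h_K}, where h_K is the support function of K. Then Δf = e^{−h_{K ∩ (−K)}}, i.e. the difference function of f equals the exponential of minus the support function of K ∩ (−K). -/
open MeasureTheory Set
open scoped ENNReal

/-!
With `L = -K` one has `√(f x · f (-y)) = e^{-(h_K x + h_L y)/2}`, so `Δf(z) = e^{-m}` where `m` is
the infimum of `(h_K x + h_L y)/2` over `(x + y)/2 = z`, i.e. half the infimal convolution of `h_K`
and `h_L` at `2z`. That infimum is `h_{K ∩ L}(z)`: `⟨x + y, b⟩ ≤ h_K x + h_L y` for `b ∈ K ∩ L` gives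
one inequality, and for `β > h_{K ∩ L}(w)` a hyperplane separating `(0, β)` from the compact convex
set `{(a - b, ⟨w, b⟩) : a ∈ K, b ∈ L}` yields `x + y = w` with `h_K x + h_L y < β`.
-/

section

variable {n : ℕ} {K L : Set (Fin n → ℝ)}

theorem suppFn_eq_sSup_dotProduct (K : Set (Fin n → ℝ)) (x : Fin n → ℝ) :
    suppFn K x = sSup ((x ⬝ᵥ ·) '' K) :=
  rfl

theorem dotProduct_le_suppFn (hK : IsCompact K) {b : Fin n → ℝ} (hb : b ∈ K) (x : Fin n → ℝ) :
    x ⬝ᵥ b ≤ suppFn K x :=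
  le_csSup (hK.image (continuous_const.dotProduct continuous_id)).bddAbove ⟨b, hb, rfl⟩

theorem suppFn_le (hK : K.Nonempty) {x : Fin n → ℝ} {r : ℝ} (h : ∀ b ∈ K, x ⬝ᵥ b ≤ r) :
    suppFn K x ≤ r :=
  csSup_le (hK.image _) (forall_mem_image.2 h)

theorem suppFn_add_suppFn_le (hK : K.Nonempty) (hL : L.Nonempty) {x y : Fin n → ℝ} {r : ℝ}
    (h : ∀ a ∈ K, ∀ b ∈ L, x ⬝ᵥ a + y ⬝ᵥ b ≤ r) : suppFn K x + suppFn L y ≤ r := by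
  suffices suppFn L y ≤ r - suppFn K x by linarith
  refine suppFn_le hL fun b hb => ?_
  suffices suppFn K x ≤ r - y ⬝ᵥ b by linarith
  exact suppFn_le hK fun a ha => by linarith [h a ha b hb]

theorem suppFn_smul (K : Set (Fin n → ℝ)) (x : Fin n → ℝ) {c : ℝ} (hc : 0 ≤ c) :
    suppFn K (c • x) = c * suppFn K x := by
  simp only [suppFn_eq_sSup_dotProduct, ← smul_eq_mul, ← Real.sSup_smul_of_nonneg hc,
    ← image_smul, image_image, smul_dotProduct]

theorem suppFn_neg_image (K : Set (Fin n → ℝ)) (x : Fin n → ℝ) :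
    suppFn ((fun y => -y) '' K) x = suppFn K (-x) := by
  simp only [suppFn_eq_sSup_dotProduct, image_image, dotProduct_neg, neg_dotProduct]

theorem suppFn_inter_add_le (hK : IsCompact K) (hL : IsCompact L) (hKL : (K ∩ L).Nonempty)
    (x y : Fin n → ℝ) : suppFn (K ∩ L) (x + y) ≤ suppFn K x + suppFn L y :=
  suppFn_le hKL fun b hb => by
    rw [add_dotProduct]
    exact add_le_add (dotProduct_le_suppFn hK hb.1 x) (dotProduct_le_suppFn hL hb.2 y)

theorem exists_dotProduct_add_mul (f : (Fin n → ℝ) × ℝ →ₗ[ℝ] ℝ) :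
    ∃ (v : Fin n → ℝ) (c : ℝ), ∀ p t, f (p, t) = v ⬝ᵥ p + c * t := by
  refine ⟨fun i => f (Pi.single i 1, 0), f (0, 1), fun p t => ?_⟩
  have hpt : (p, t) = ∑ i, p i • (Pi.single i 1, 0) + t • ((0 : Fin n → ℝ), (1 : ℝ)) := by
    ext <;> simp [Prod.fst_sum, Prod.snd_sum, Finset.sum_apply, Pi.single_apply]
  rw [hpt, map_add, map_sum]
  simp only [map_smul, smul_eq_mul, dotProduct, mul_comm]

theorem exists_add_eq_suppFn_add_lt (hKc : IsCompact K) (hKcv : Convex ℝ K) (hLc : IsCompact L)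
    (hLcv : Convex ℝ L) (hKL : (K ∩ L).Nonempty) {w : Fin n → ℝ} {β : ℝ}
    (hβ : suppFn (K ∩ L) w < β) : ∃ x y, x + y = w ∧ suppFn K x + suppFn L y < β := by
  have hKLc : IsCompact (K ∩ L) := hKc.inter_right hLc.isClosed
  let T : (Fin n → ℝ) × (Fin n → ℝ) →ₗ[ℝ] (Fin n → ℝ) × ℝ :=
    LinearMap.prod (LinearMap.fst ℝ _ _ - LinearMap.snd ℝ _ _)
      (dotProductBilin ℝ ℝ w ∘ₗ LinearMap.snd ℝ _ _)
  have hT : ∀ a b, T (a, b) = (a - b, w ⬝ᵥ b) := fun _ _ => rfl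
  have hβT : ((0 : Fin n → ℝ), β) ∉ T '' (K ×ˢ L) := by
    rintro ⟨⟨a, b⟩, ⟨ha, hb⟩, hab⟩
    rw [hT, Prod.mk.injEq, sub_eq_zero] at hab
    obtain ⟨rfl, hwa⟩ := hab
    exact (dotProduct_le_suppFn hKLc ⟨ha, hb⟩ w).not_gt (hwa ▸ hβ)
  obtain ⟨f, u, hfT, hfβ⟩ := geometric_hahn_banach_closed_point
    ((hKcv.prod hLcv).linear_image T)
    ((hKc.prod hLc).image T.continuous_of_finiteDimensional).isClosed hβT
  obtain ⟨v, c, hf⟩ := exists_dotProduct_add_mul f.toLinearMap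
  simp only [ContinuousLinearMap.coe_coe] at hf
  have hsep : ∀ a ∈ K, ∀ b ∈ L, v ⬝ᵥ (a - b) + c * (w ⬝ᵥ b) < u := fun a ha b hb => by
    simpa [hT, hf] using hfT _ ⟨(a, b), ⟨ha, hb⟩, rfl⟩
  replace hfβ : u < c * β := by simpa [hf] using hfβ
  obtain ⟨m, hm⟩ := hKL
  have hc : 0 < c := by
    have hum := hsep m hm.1 m hm.2
    have hwm := dotProduct_le_suppFn hKLc hm w
    rw [sub_self, dotProduct_zero, zero_add] at hum
    nlinarith
  refine ⟨c⁻¹ • v, w - c⁻¹ • v, add_sub_cancel _ _, ?_⟩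
  calc suppFn K (c⁻¹ • v) + suppFn L (w - c⁻¹ • v) ≤ u / c := by
        refine suppFn_add_suppFn_le ⟨m, hm.1⟩ ⟨m, hm.2⟩ fun a ha b hb => ?_
        have hab := hsep a ha b hb
        rw [le_div_iff₀ hc]
        simp only [smul_dotProduct, sub_dotProduct, dotProduct_sub, smul_eq_mul] at hab ⊢
        field_simp
        linarith
    _ < β := by rwa [div_lt_iff₀ hc, mul_comm]

theorem isGLB_half_suppFn_add (hKc : IsCompact K) (hKcv : Convex ℝ K) (hLc : IsCompact L)
    (hLcv : Convex ℝ L) (hKL : (K ∩ L).Nonempty) (z : Fin n → ℝ) :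
    IsGLB {t | ∃ x y : Fin n → ℝ, (1 / 2 : ℝ) • (x + y) = z ∧ t = (suppFn K x + suppFn L y) / 2}
      (suppFn (K ∩ L) z) := by
  refine ⟨?_, fun b hb => le_of_not_gt fun hzb => ?_⟩
  · rintro _ ⟨x, y, rfl, rfl⟩
    rw [suppFn_smul _ _ (by norm_num)]
    linarith [suppFn_inter_add_le hKc hLc hKL x y]
  · have h2z : suppFn (K ∩ L) ((2 : ℝ) • z) < 2 * b := by
      rw [suppFn_smul _ _ zero_le_two]
      linarith
    obtain ⟨x, y, hxy, hlt⟩ := exists_add_eq_suppFn_add_lt hKc hKcv hLc hLcv hKL h2z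
    have hbxy := hb ⟨x, y, by rw [hxy, smul_smul]; norm_num, rfl⟩
    linarith

theorem diffFn_exp_neg_eq_of_isGLB {g : (Fin n → ℝ) → ℝ} {z : Fin n → ℝ} {a : ℝ}
    (h : IsGLB {t | ∃ x y : Fin n → ℝ, (1 / 2 : ℝ) • (x + y) = z ∧ t = (g x + g (-y)) / 2} a) :
    diffFn (fun x => Real.exp (-g x)) z = ENNReal.ofReal (Real.exp (-a)) := by
  set F : ℝ → ℝ≥0∞ := fun t => ENNReal.ofReal (Real.exp (-t))
  have hF : Antitone F := fun s t hst =>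
    ENNReal.ofReal_le_ofReal (Real.exp_le_exp.2 (neg_le_neg hst))
  have hsqrt : ∀ x y,
      √(Real.exp (-g x) * Real.exp (-g (-y))) = Real.exp (-((g x + g (-y)) / 2)) :=
    fun x y => by rw [← Real.exp_add, ← Real.exp_half]; ring_nf
  have hset : {r | ∃ x y : Fin n → ℝ, (1 / 2 : ℝ) • (x + y) = z ∧
      r = ENNReal.ofReal √(Real.exp (-g x) * Real.exp (-g (-y)))} =
      F '' {t | ∃ x y : Fin n → ℝ, (1 / 2 : ℝ) • (x + y) = z ∧ t = (g x + g (-y)) / 2} := by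
    ext r
    constructor
    · rintro ⟨x, y, hxy, rfl⟩
      exact ⟨_, ⟨x, y, hxy, rfl⟩, by rw [hsqrt]⟩
    · rintro ⟨_, ⟨x, y, hxy, rfl⟩, rfl⟩
      exact ⟨x, y, hxy, by rw [hsqrt]⟩
  rw [diffFn, hset]
  refine (h.isLUB_of_tendsto (hF.antitoneOn _) ⟨_, z, z, ?_, rfl⟩ ?_).sSup_eq
  · module
  · have hFc : Continuous F :=
      ENNReal.continuous_ofReal.comp (Real.continuous_exp.comp continuous_neg)
    exact (hFc.tendsto a).mono_left nhdsWithin_le_nhds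

end

/-- For a convex body `K` in `ℝⁿ` with `0` in its interior and `f = e^{−h_K}`,
the difference function of `f` is `e^{−h_{K ∩ (−K)}}`. -/
theorem diffFn_exp_neg_suppFn {n : ℕ} (K : Set (Fin n → ℝ))
    (hKcomp : IsCompact K) (hKconv : Convex ℝ K) (h0 : 0 ∈ interior K) :
    ∀ z : Fin n → ℝ,
      diffFn (fun x => Real.exp (-(suppFn K x))) z =
        ENNReal.ofReal (Real.exp (-(suppFn (K ∩ ((fun y => -y) '' K)) z))) := by
  intro z
  have h0K : (0 : Fin n → ℝ) ∈ K := interior_subset h0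
  have hglb := isGLB_half_suppFn_add hKcomp hKconv (hKcomp.image continuous_neg)
    (image_neg_eq_neg (s := K) ▸ hKconv.neg) ⟨0, h0K, 0, h0K, neg_zero⟩ z
  simp only [suppFn_neg_image] at hglb
  exact diffFn_exp_neg_eq_of_isGLB hglb
end
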